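/- arXiv:1408.3706 — 2 statements merged into one kernel-verified Lean document; each statement's English description precedes it below -/
import Mathlib

section
/- Let n ≥ 2 and Λ' a proper subset of {1,…,n−1}. With b(i) := #{k : 1 ≤ k < i, k ∉ Λ'}, let a_{Λ'} be the real span of {H^i : i ∈ {1,…,n−1}, i ∉ Λ'} and n_{Λ'} := {X ∈ M_n(ℝ) : X_{ij} = 0 unless b(i) < b(j)}. Then the solvable subalgebra s_{Λ'} := a_{Λ'} + n_{Λ'} is autoparallel in sl(n,ℝ) for the product ∇_X Y := XY − (tr(XY)/n)·I_n: for all X, Y ∈ s_{Λ'} one has XY − (tr(XY)/n)·I_n ∈ s_{Λ'}. -/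
/-! `s_{Λ'}` is exactly the set of traceless matrices that are block upper triangular for `blk Λ`
with scalar diagonal blocks. The scalar diagonal blocks come from `a_{Λ'}`: a block-constant
diagonal telescopes into a combination of the `diag(1,…,1,0,…,0) = H^i + (i/n)·I`, in which the
cuts `i ∈ Λ'` get coefficient zero, and a trace computation kills the multiple of `I`. Dropping
the trace condition leaves a unital subalgebra, so `XY − (tr(XY)/n)·I` stays in it, and its trace
vanishes. -/

noncomputable section

/-- The block function `b(i) = #{k : 1 ≤ k < i, k ∉ Λ'}` (here `i : Fin n` is the
0-based index corresponding to the 1-based row index `i+1`). -/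
def blk (Λ : Finset ℕ) {n : ℕ} (i : Fin n) : ℕ :=
  ((Finset.Icc 1 (i : ℕ)).filter (fun k => k ∉ Λ)).card

/-- The diagonal matrix `H^i` whose first `i` diagonal entries are `(n−i)/n` and whose
last `n−i` entries are `−i/n`. -/
def Hmat (n i : ℕ) : Matrix (Fin n) (Fin n) ℝ :=
  Matrix.diagonal (fun t : Fin n =>
    if (t : ℕ) < i then ((n : ℝ) - (i : ℝ)) / (n : ℝ) else -(i : ℝ) / (n : ℝ))

/-- Membership in `a_{Λ'}`: the real span of the `H^i` with `i ∈ {1,…,n−1}`, `i ∉ Λ'`. -/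
def inA (n : ℕ) (Λ : Finset ℕ) (X : Matrix (Fin n) (Fin n) ℝ) : Prop :=
  X ∈ Submodule.span ℝ
    {M : Matrix (Fin n) (Fin n) ℝ |
      ∃ i ∈ Finset.Icc 1 (n - 1), i ∉ Λ ∧ M = Hmat n i}

/-- Membership in `n_{Λ'}`: matrices with `X_{ij} = 0` unless `b(i) < b(j)`. -/
def inN (n : ℕ) (Λ : Finset ℕ) (X : Matrix (Fin n) (Fin n) ℝ) : Prop :=
  ∀ i j : Fin n, ¬ blk Λ i < blk Λ j → X i j = 0

/-- Membership in `s_{Λ'} = a_{Λ'} + n_{Λ'}`. -/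
def inS (n : ℕ) (Λ : Finset ℕ) (X : Matrix (Fin n) (Fin n) ℝ) : Prop :=
  ∃ A N : Matrix (Fin n) (Fin n) ℝ, inA n Λ A ∧ inN n Λ N ∧ X = A + N

open Matrix Finset

namespace Matrix

variable {ι R α : Type*} [Fintype ι] [DecidableEq ι] [CommRing R] [Preorder α]

def scalarBlockTriangular (b : ι → α) : Subalgebra R (Matrix ι ι R) where
  carrier :=
    {X | (∀ i j, i ≠ j → ¬ b i < b j → X i j = 0) ∧ ∀ i j, b i = b j → X i i = X j j}
  mul_mem' {X Y} hX hY := by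
    have hdiag : ∀ i, (X * Y) i i = X i i * Y i i := fun i => by
      refine (mul_apply ..).trans (sum_eq_single i (fun k _ hki => ?_) (by simp))
      by_cases h : b i < b k
      · rw [hY.1 k i hki (lt_asymm h), mul_zero]
      · rw [hX.1 i k (Ne.symm hki) h, zero_mul]
    refine ⟨fun i j hij hb => (mul_apply ..).trans (sum_eq_zero fun k _ => ?_), fun i j h => ?_⟩
    · by_cases hik : i = k
      · subst hik
        rw [hY.1 i j hij hb, mul_zero]
      by_cases h : b i < b k
      · have hkj : k ≠ j := by rintro rfl; exact hb h
        rw [hY.1 k j hkj (fun h' => hb (h.trans h')), mul_zero]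
      · rw [hX.1 i k hik h, zero_mul]
    · rw [hdiag, hdiag, hX.2 i j h, hY.2 i j h]
  add_mem' {X Y} hX hY :=
    ⟨fun i j hij hb => by simp [hX.1 i j hij hb, hY.1 i j hij hb],
      fun i j h => by simp [hX.2 i j h, hY.2 i j h]⟩
  algebraMap_mem' r :=
    ⟨fun i j hij _ => by simp [algebraMap_eq_diagonal, hij], fun i j _ => by
      simp [algebraMap_eq_diagonal]⟩

theorem diagonal_mem_scalarBlockTriangular {b : ι → α} {d : ι → R}
    (hd : ∀ i j, b i = b j → d i = d j) : diagonal d ∈ scalarBlockTriangular b :=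
  ⟨fun i j hij _ => diagonal_apply_ne d hij, fun i j h => by simpa using hd i j h⟩

theorem diagonal_eq_sum_smul_diagonal_lt_add_smul_one {n : ℕ} (e : ℕ → R) :
    diagonal (fun t : Fin n => e t) =
      ∑ i ∈ range (n - 1), (e i - e (i + 1)) •
          diagonal (fun t : Fin n => if (t : ℕ) < i + 1 then 1 else 0) + e (n - 1) • 1 := by
  ext s t
  by_cases hst : s = t
  · subst hst
    have hfilter : {i ∈ range (n - 1) | (s : ℕ) < i + 1} = Ico (s : ℕ) (n - 1) := by
      ext i; simp; omega
    simp only [add_apply, sum_apply, smul_apply, diagonal_apply_eq, one_apply_eq, smul_eq_mul,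
      mul_ite, mul_one, mul_zero]
    have htelescope : ∑ i ∈ Ico (s : ℕ) (n - 1), (e i - e (i + 1)) = e s - e (n - 1) := by
      rw [← neg_sub, ← sum_Ico_sub e (by omega), ← sum_neg_distrib]
      simp only [neg_sub]
    rw [← sum_filter, hfilter, htelescope, sub_add_cancel]
  · simp [sum_apply, hst]

end Matrix

section Block

variable {n : ℕ} {Λ : Finset ℕ}

theorem blk_lt_blk {i : ℕ} (hi : 1 ≤ i) (hiΛ : i ∉ Λ) {s t : Fin n} (hs : (s : ℕ) < i)
    (ht : i ≤ t) : blk Λ s < blk Λ t := by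
  refine card_lt_card ((ssubset_iff_of_subset ?_).2 ⟨i, ?_, ?_⟩)
  · exact filter_subset_filter _ (Icc_subset_Icc_right (by omega))
  · simp [hiΛ]; omega
  · simp; omega

theorem blk_eq_blk_of_succ_mem {s t : Fin n} (hst : (t : ℕ) = s + 1) (ht : (t : ℕ) ∈ Λ) :
    blk Λ s = blk Λ t := by
  rw [blk, blk, hst, ← insert_Icc_right_eq_Icc_add_one (by omega), filter_insert,
    if_neg (by simpa [hst] using ht)]

theorem Hmat_eq_diagonal_sub_smul_one (hn : n ≠ 0) (i : ℕ) :
    Hmat n i =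
      diagonal (fun t : Fin n => if (t : ℕ) < i then 1 else 0) - ((i : ℝ) / n) • 1 := by
  ext s t
  by_cases hst : s = t
  · subst hst
    by_cases hs : (s : ℕ) < i <;> simp [Hmat, hs] <;> field_simp
  · simp [Hmat, hst]

theorem trace_Hmat (hn : n ≠ 0) {i : ℕ} (hi : i ≤ n) : trace (Hmat n i) = 0 := by
  rw [Hmat_eq_diagonal_sub_smul_one hn, trace_sub, trace_diagonal, sum_boole,
    Fin.card_filter_val_lt, trace_smul, trace_one, Fintype.card_fin, min_eq_right hi,
    smul_eq_mul, div_mul_cancel₀ _ (by simpa), sub_self]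

theorem Hmat_mem_scalarBlockTriangular {i : ℕ} (hi : 1 ≤ i) (hiΛ : i ∉ Λ) :
    Hmat n i ∈ scalarBlockTriangular (blk Λ) := by
  refine diagonal_mem_scalarBlockTriangular fun s t hst => ?_
  have hs_iff : (s : ℕ) < i ↔ (t : ℕ) < i := by
    constructor <;> intro h <;> by_contra h'
    · exact (blk_lt_blk hi hiΛ h (not_lt.1 h')).ne hst
    · exact (blk_lt_blk hi hiΛ h (not_lt.1 h')).ne hst.symm
  simp only [hs_iff]

end Block

section Membership

variable {n : ℕ} {Λ : Finset ℕ} {X : Matrix (Fin n) (Fin n) ℝ}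

theorem inA.mem_and_trace_eq_zero (hn : n ≠ 0) (hX : inA n Λ X) :
    X ∈ scalarBlockTriangular (blk Λ) ∧ trace X = 0 := by
  refine (Submodule.span_le (p := Subalgebra.toSubmodule (scalarBlockTriangular (blk Λ)) ⊓
    LinearMap.ker (traceLinearMap (Fin n) ℝ ℝ))).2 ?_ hX
  rintro _ ⟨i, hi, hiΛ, rfl⟩
  rw [mem_Icc] at hi
  exact ⟨Hmat_mem_scalarBlockTriangular hi.1 hiΛ, trace_Hmat hn (by omega)⟩

theorem inN.mem_and_trace_eq_zero (hX : inN n Λ X) :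
    X ∈ scalarBlockTriangular (blk Λ) ∧ trace X = 0 := by
  have hdiag (i : Fin n) : X i i = 0 := hX i i (lt_irrefl _)
  exact ⟨⟨fun i j _ h => hX i j h, fun i j _ => by rw [hdiag, hdiag]⟩,
    by simp [trace, hdiag]⟩

theorem inA_diagonal (hn : n ≠ 0) {d : Fin n → ℝ}
    (hd : ∀ s t, blk Λ s = blk Λ t → d s = d t) (htr : ∑ t, d t = 0) :
    inA n Λ (diagonal d) := by
  set V : Submodule ℝ (Matrix (Fin n) (Fin n) ℝ) := Submodule.span ℝ
    {M | ∃ i ∈ Icc 1 (n - 1), i ∉ Λ ∧ M = Hmat n i}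
  set e : ℕ → ℝ := fun j => if h : j < n then d ⟨j, h⟩ else 0
  have hde : diagonal d = diagonal (fun t : Fin n => e t) := by simp [e]
  have hsup : diagonal d ∈ V ⊔ ℝ ∙ 1 := by
    rw [hde, diagonal_eq_sum_smul_diagonal_lt_add_smul_one]
    refine add_mem (sum_mem fun i hi => ?_)
      (Submodule.smul_mem _ _ (Submodule.mem_sup_right (Submodule.mem_span_singleton_self _)))
    rw [mem_range] at hi
    by_cases hiΛ : i + 1 ∈ Λ
    · have : e i = e (i + 1) := by
        simp only [e, dif_pos (show i < n by omega), dif_pos (show i + 1 < n by omega)]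
        exact hd _ _ (blk_eq_blk_of_succ_mem rfl hiΛ)
      simp [this]
    · refine Submodule.smul_mem _ _ ?_
      rw [← sub_add_cancel (diagonal _) ((((i + 1 : ℕ) : ℝ) / n) • (1 : Matrix _ _ ℝ)),
        ← Hmat_eq_diagonal_sub_smul_one hn]
      refine add_mem (Submodule.mem_sup_left (Submodule.subset_span ⟨i + 1, ?_, hiΛ, rfl⟩))
        (Submodule.mem_sup_right (Submodule.smul_mem _ _ (Submodule.mem_span_singleton_self _)))
      rw [mem_Icc]; omega
  obtain ⟨v, hv, w, hw, hvw⟩ := Submodule.mem_sup.1 hsup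
  obtain ⟨μ, rfl⟩ := Submodule.mem_span_singleton.1 hw
  have hμ : μ * n = 0 := by
    have := congrArg trace hvw
    rwa [trace_add, (inA.mem_and_trace_eq_zero hn hv).2, trace_smul, trace_one, trace_diagonal,
      htr, Fintype.card_fin, zero_add] at this
  rw [← hvw, (mul_eq_zero.1 hμ).resolve_right (by simpa), zero_smul, add_zero]
  exact hv

theorem inS_iff (hn : n ≠ 0) :
    inS n Λ X ↔ X ∈ scalarBlockTriangular (blk Λ) ∧ trace X = 0 := by
  constructor
  · rintro ⟨A, N, hA, hN, rfl⟩
    obtain ⟨hAS, hAtr⟩ := hA.mem_and_trace_eq_zero hn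
    obtain ⟨hNS, hNtr⟩ := hN.mem_and_trace_eq_zero
    exact ⟨add_mem hAS hNS, by rw [trace_add, hAtr, hNtr, add_zero]⟩
  · rintro ⟨hXS, hXtr⟩
    refine ⟨diagonal X.diag, X - diagonal X.diag, inA_diagonal hn hXS.2 hXtr, fun i j hij => ?_,
      (add_sub_cancel _ _).symm⟩
    by_cases h : i = j
    · subst h
      simp
    · rw [Matrix.sub_apply, diagonal_apply_ne _ h, hXS.1 i j h hij, sub_zero]

end Membership

theorem solvable_autoparallel_sl_real_general (n : ℕ) (hn : 2 ≤ n)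
    (Λ : Finset ℕ) :
    ∀ X Y : Matrix (Fin n) (Fin n) ℝ, inS n Λ X → inS n Λ Y →
      inS n Λ (X * Y - (Matrix.trace (X * Y) / (n : ℝ)) • (1 : Matrix (Fin n) (Fin n) ℝ)) := by
  intro X Y hX hY
  have hn0 : n ≠ 0 := by omega
  rw [inS_iff hn0] at hX hY ⊢
  refine ⟨sub_mem (mul_mem hX.1 hY.1) (Subalgebra.smul_mem _ (one_mem _) _), ?_⟩
  rw [trace_sub, trace_smul, trace_one, Fintype.card_fin, smul_eq_mul,
    div_mul_cancel₀ _ (by exact_mod_cast hn0), sub_self]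

/-- For `n ≥ 2` and a proper subset `Λ'` of `{1,…,n−1}`, the solvable
subalgebra `s_{Λ'} = a_{Λ'} + n_{Λ'}` is autoparallel in `sl(n,ℝ)` for the product
`∇_X Y = XY − (tr(XY)/n)·I_n`. -/
theorem solvable_autoparallel_sl_real (n : ℕ) (hn : 2 ≤ n)
    (Λ : Finset ℕ) (hΛ : Λ ⊆ Finset.Icc 1 (n - 1)) (hΛne : Λ ≠ Finset.Icc 1 (n - 1)) :
    ∀ X Y : Matrix (Fin n) (Fin n) ℝ, inS n Λ X → inS n Λ Y →
      inS n Λ (X * Y - (Matrix.trace (X * Y) / (n : ℝ)) • (1 : Matrix (Fin n) (Fin n) ℝ)) :=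
  solvable_autoparallel_sl_real_general n hn Λ

end
end

section
/- Let n ≥ 2 and Λ' a proper subset of {1,…,n−1}, and let s_{Λ'} = a_{Λ'} + n_{Λ'} ⊆ sl(n,ℝ) be the associated solvable subalgebra. Then the product ∇_X Y := XY − (tr(XY)/n)·I_n restricted to s_{Λ'} is not flat: there exist X, Y, Z ∈ s_{Λ'} with R(X,Y)Z := ∇_X(∇_Y Z) − ∇_Y(∇_X Z) − ∇_{[X,Y]}Z ≠ 0. (For instance X = E_{1n} and Y = Z = H^i for any i ∈ {1,…,n−1} with i ∉ Λ' give R(X,Y)Z = −(i(n−i)/n²)·E_{1n}.) -/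
noncomputable section

/-- The product `∇_X Y = XY − (tr(XY)/n)·I_n` on `sl(n,ℝ)`. -/
def nabSL (n : ℕ) (X Y : Matrix (Fin n) (Fin n) ℝ) : Matrix (Fin n) (Fin n) ℝ :=
  X * Y - (Matrix.trace (X * Y) / (n : ℝ)) • (1 : Matrix (Fin n) (Fin n) ℝ)

/-! For an off-diagonal matrix unit `E` and a diagonal `D`, the products `E`, `E D`, `E D²` are
traceless, so `∇` acts on the terms of `R(E, D) D` as plain matrix multiplication except in
`∇_D D = D² − (tr D² / n) I`; the associative terms cancel and `R(E, D) D = −(tr D² / n) E`.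
Take `E = E_{1n}`, which lies in `n_{Λ'}` because some `i ∉ Λ'` separates the first and the last
row into different blocks, and `D = H^i ∈ a_{Λ'}`, for which `tr (H^i)² = i (n − i) / n ≠ 0`. -/

open Matrix

section MatrixUnits

variable {m R : Type*} [Fintype m] [DecidableEq m] [CommSemiring R]

lemma single_mul_diagonal (a b : m) (c : R) (d : m → R) :
    single a b c * diagonal d = d b • single a b c := by
  ext i j
  simp only [mul_diagonal, Matrix.smul_apply, single_apply, smul_eq_mul]
  split_ifs with h
  · rw [← h.2, mul_comm]
  · simp

lemma trace_single_mul_diagonal {a b : m} (hab : a ≠ b) (c : R) (d : m → R) :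
    trace (single a b c * diagonal d) = 0 := by
  rw [single_mul_diagonal, trace_smul, trace_single_eq_of_ne _ _ _ hab, smul_zero]

end MatrixUnits

lemma single_ne_zero {m R : Type*} [DecidableEq m] [Zero R] (a b : m) {c : R} (hc : c ≠ 0) :
    single a b c ≠ 0 :=
  fun h => hc (by simpa using congrFun (congrFun h a) b)

lemma nabSL_eq_mul_of_trace_eq_zero {n : ℕ} {X Y : Matrix (Fin n) (Fin n) ℝ}
    (h : trace (X * Y) = 0) : nabSL n X Y = X * Y := by
  simp [nabSL, h]

lemma curvature_eq_smul_of_trace_eq_zero {n : ℕ} {E D : Matrix (Fin n) (Fin n) ℝ}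
    (h₀ : trace E = 0) (h₁ : trace (E * D) = 0) (h₂ : trace (E * (D * D)) = 0) :
    nabSL n E (nabSL n D D) - nabSL n D (nabSL n E D) - nabSL n ⁅E, D⁆ D
      = -(trace (D * D) / n) • E := by
  set c := trace (D * D) / n
  have hED : nabSL n E (nabSL n D D) = E * (D * D) - c • E := by
    rw [nabSL_eq_mul_of_trace_eq_zero] <;> simp [nabSL, mul_sub, h₀, h₂, c]
  have hDED : nabSL n D (nabSL n E D) = D * E * D := by
    rw [nabSL_eq_mul_of_trace_eq_zero h₁, nabSL_eq_mul_of_trace_eq_zero] <;>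
      simp [Matrix.mul_assoc, trace_mul_comm D, h₂]
  have hBr : nabSL n ⁅E, D⁆ D = E * (D * D) - D * E * D := by
    rw [nabSL_eq_mul_of_trace_eq_zero] <;>
      simp [Ring.lie_def, sub_mul, Matrix.mul_assoc, trace_mul_comm D, h₂]
  rw [hED, hDED, hBr, neg_smul]
  abel

lemma trace_Hmat_mul_self {n i : ℕ} (hi : i ≤ n) :
    trace (Hmat n i * Hmat n i) = i * (n - i) / n := by
  set f : ℕ → ℝ := fun t => if t < i then ((n : ℝ) - i) / n else -(i : ℝ) / n
  have h_lt : ∀ t ∈ Finset.range i, f t * f t = ((n - i) / n) ^ 2 := fun t ht => by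
    simp only [f, if_pos (Finset.mem_range.mp ht), sq]
  have h_ge : ∀ t ∈ Finset.Ico i n, f t * f t = (i / n) ^ 2 := fun t ht => by
    simp only [f, if_neg (not_lt.mpr (Finset.mem_Ico.mp ht).1)]; ring
  rw [Hmat, diagonal_mul_diagonal, trace_diagonal, Fin.sum_univ_eq_sum_range (fun t => f t * f t),
    ← Finset.sum_range_add_sum_Ico _ hi, Finset.sum_congr rfl h_lt, Finset.sum_congr rfl h_ge]
  rcases Nat.eq_zero_or_pos n with rfl | hn
  · simp
  simp only [Finset.sum_const, Finset.card_range, Nat.card_Ico, nsmul_eq_mul, Nat.cast_sub hi]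
  field_simp
  ring

lemma curvature_single_Hmat {n i : ℕ} (hi : i ≤ n) {a b : Fin n} (hab : a ≠ b) (c : ℝ) :
    nabSL n (single a b c) (nabSL n (Hmat n i) (Hmat n i))
        - nabSL n (Hmat n i) (nabSL n (single a b c) (Hmat n i))
        - nabSL n ⁅single a b c, Hmat n i⁆ (Hmat n i)
      = -(i * (n - i) / n ^ 2 : ℝ) • single a b c := by
  rw [curvature_eq_smul_of_trace_eq_zero (D := Hmat n i) (trace_single_eq_of_ne _ _ _ hab)
    (trace_single_mul_diagonal hab _ _)
    (by rw [Hmat, diagonal_mul_diagonal]; exact trace_single_mul_diagonal hab _ _),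
    trace_Hmat_mul_self hi, div_div, ← sq]

section Membership

variable {n : ℕ} {Λ : Finset ℕ}

lemma blk_eq_zero_of_val_eq_zero {i : Fin n} (hi : (i : ℕ) = 0) : blk Λ i = 0 := by
  simp [blk, hi]

lemma blk_pos {i : Fin n} {k : ℕ} (hk : k ∈ Finset.Icc 1 (i : ℕ)) (hkΛ : k ∉ Λ) :
    0 < blk Λ i :=
  Finset.card_pos.mpr ⟨k, Finset.mem_filter.mpr ⟨hk, hkΛ⟩⟩

lemma inA_Hmat {i : ℕ} (hi : i ∈ Finset.Icc 1 (n - 1)) (hiΛ : i ∉ Λ) : inA n Λ (Hmat n i) :=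
  Submodule.subset_span ⟨i, hi, hiΛ, rfl⟩

lemma inN_single {a b : Fin n} (hab : blk Λ a < blk Λ b) (c : ℝ) : inN n Λ (single a b c) := by
  intro i j hij
  apply single_apply_of_ne
  rintro ⟨rfl, rfl⟩
  exact hij hab

lemma inS_of_inA {X : Matrix (Fin n) (Fin n) ℝ} (h : inA n Λ X) : inS n Λ X :=
  ⟨X, 0, h, fun _ _ _ => rfl, (add_zero X).symm⟩

lemma inS_of_inN {X : Matrix (Fin n) (Fin n) ℝ} (h : inN n Λ X) : inS n Λ X :=
  ⟨0, X, Submodule.zero_mem _, h, (zero_add X).symm⟩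

end Membership

theorem solvable_not_flat_sl_real_general (n : ℕ)
    (Λ : Finset ℕ) (hΛ : Λ ⊆ Finset.Icc 1 (n - 1)) (hΛne : Λ ≠ Finset.Icc 1 (n - 1)) :
    ∃ X Y Z : Matrix (Fin n) (Fin n) ℝ, inS n Λ X ∧ inS n Λ Y ∧ inS n Λ Z ∧
      nabSL n X (nabSL n Y Z) - nabSL n Y (nabSL n X Z) - nabSL n ⁅X, Y⁆ Z ≠ 0 := by
  obtain ⟨i, hi, hiΛ⟩ := Finset.exists_of_ssubset (hΛ.ssubset_of_ne hΛne)
  obtain ⟨hi₁, hi₂⟩ := Finset.mem_Icc.mp hi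
  let first : Fin n := ⟨0, by omega⟩
  let last : Fin n := ⟨n - 1, by omega⟩
  have hne : first ≠ last := Fin.ne_of_val_ne (by simp only [first, last]; omega)
  have hblk : blk Λ first < blk Λ last := by
    rw [blk_eq_zero_of_val_eq_zero rfl]
    exact blk_pos hi hiΛ
  have hH : inS n Λ (Hmat n i) := inS_of_inA (inA_Hmat hi hiΛ)
  refine ⟨single first last 1, Hmat n i, Hmat n i, inS_of_inN (inN_single hblk 1), hH, hH, ?_⟩
  rw [curvature_single_Hmat (by omega) hne]
  have hi0 : (0 : ℝ) < i := by exact_mod_cast hi₁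
  have hin : (i : ℝ) < n := by exact_mod_cast (by omega : i < n)
  have hcoef : 0 < (i * (n - i) / n ^ 2 : ℝ) :=
    div_pos (mul_pos hi0 (sub_pos.mpr hin)) (pow_pos (hi0.trans hin) 2)
  exact smul_ne_zero (neg_ne_zero.mpr hcoef.ne') (single_ne_zero _ _ one_ne_zero)

/-- For `n ≥ 2` and a proper subset `Λ'` of `{1,…,n−1}`, the product
`∇_X Y = XY − (tr(XY)/n)·I_n` restricted to the solvable subalgebra `s_{Λ'}` is not
flat: some `X, Y, Z ∈ s_{Λ'}` have nonvanishing curvature. -/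
theorem solvable_not_flat_sl_real (n : ℕ) (hn : 2 ≤ n)
    (Λ : Finset ℕ) (hΛ : Λ ⊆ Finset.Icc 1 (n - 1)) (hΛne : Λ ≠ Finset.Icc 1 (n - 1)) :
    ∃ X Y Z : Matrix (Fin n) (Fin n) ℝ, inS n Λ X ∧ inS n Λ Y ∧ inS n Λ Z ∧
      nabSL n X (nabSL n Y Z) - nabSL n Y (nabSL n X Z) - nabSL n ⁅X, Y⁆ Z ≠ 0 :=
  solvable_not_flat_sl_real_general n Λ hΛ hΛne

end
end
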